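/- Let $m > 0$. For $\lambda > 0$ define $\rho_\lambda(s) = 4m + \int_{4m}^{s} \frac{\lambda u}{(1 - \frac{2m}{u})\sqrt{1 - \frac{2m}{u} + \lambda^2 u^2}}\, du$ for $s \in (2m, \infty)$. Then for every fixed $s \in (2m, \infty)$, $\rho_\lambda(s) \to s + 2m\log\big(\frac{s}{2m} - 1\big)$ as $\lambda \to \infty$. -/

import Mathlib

/-!
Writing `A = 1 - 2m/u`, the integrand is `λu / (A √(A + λ²u²))`, and rationalising gives
`1/A - λu / (A √(A + λ²u²)) = 1 / (√(A + λ²u²) (√(A + λ²u²) + λu)) ≤ 1 / (λu)²`.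
So on `[min (4m) s, max (4m) s] ⊆ (2m, ∞)` the integrand converges uniformly to `1/A`, and the
integrals converge to `∫_{4m}^{s} du / (1 - 2m/u)`, which is computed with the antiderivative
`u + 2m log(u - 2m)`.
-/

open Filter Topology Set Interval

/-- The tortoise coordinate `r* = r + 2m log(r - 2m)` of the Schwarzschild metric. -/
noncomputable def tortoise (m u : ℝ) : ℝ := u + 2 * m * Real.log (u - 2 * m)

/-- The derivative `ρ_λ'(u)` of the umbilical slice with parameter `λ`. -/
noncomputable def umbilicalSlope (m lam u : ℝ) : ℝ :=
  lam * u / ((1 - 2 * m / u) * √(1 - 2 * m / u + lam ^ 2 * u ^ 2))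

lemma TendstoUniformlyOn.of_dist_le {ι α β : Type*} [PseudoMetricSpace β] {F : ι → α → β}
    {f : α → β} {p : Filter ι} {s : Set α} {ε : ι → ℝ} (hε : Tendsto ε p (𝓝 0))
    (h : ∀ᶠ i in p, ∀ x ∈ s, dist (f x) (F i x) ≤ ε i) : TendstoUniformlyOn F f p s :=
  Metric.tendstoUniformlyOn_iff.2 fun _ hδ =>
    (h.and (hε.eventually (gt_mem_nhds hδ))).mono fun _ hi x hx => (hi.1 x hx).trans_lt hi.2

lemma abs_inv_sub_div_mul_sqrt_le {a x : ℝ} (ha : 0 < a) (hx : 0 < x) :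
    |a⁻¹ - x / (a * √(a + x ^ 2))| ≤ 1 / x ^ 2 := by
  have hD : 0 < a + x ^ 2 := by positivity
  have hsq : √(a + x ^ 2) ^ 2 = a + x ^ 2 := Real.sq_sqrt hD.le
  have hx_le : x ≤ √(a + x ^ 2) := Real.le_sqrt_of_sq_le (by linarith)
  have hS : 0 < √(a + x ^ 2) := Real.sqrt_pos.2 hD
  have key : a⁻¹ - x / (a * √(a + x ^ 2)) = 1 / (√(a + x ^ 2) * (√(a + x ^ 2) + x)) := by
    field_simp
    nlinarith
  rw [key, abs_of_pos (by positivity)]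
  gcongr
  nlinarith

lemma one_sub_two_mul_div_pos {m u : ℝ} (hm : 0 ≤ m) (hu : 2 * m < u) : 0 < 1 - 2 * m / u := by
  have : 2 * m / u < 1 := (div_lt_one (by linarith)).2 hu
  linarith

lemma hasDerivAt_tortoise {m u : ℝ} (hu : u ≠ 0) (hu' : u ≠ 2 * m) :
    HasDerivAt (tortoise m) (1 - 2 * m / u)⁻¹ u := by
  have hsub : u - 2 * m ≠ 0 := sub_ne_zero.2 hu'
  have h : HasDerivAt (tortoise m) (1 + 2 * m * (1 / (u - 2 * m))) u :=
    (hasDerivAt_id' u).add ((((hasDerivAt_id' u).sub_const (2 * m)).log hsub).const_mul (2 * m))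
  convert h using 1
  field_simp
  ring

lemma continuousOn_inv_one_sub_two_mul_div {m : ℝ} (hm : 0 ≤ m) :
    ContinuousOn (fun u => (1 - 2 * m / u)⁻¹) (Ioi (2 * m)) := by
  refine ContinuousOn.inv₀ (by fun_prop (disch := intro u hu; simp at hu; linarith)) ?_
  exact fun u hu => (one_sub_two_mul_div_pos hm hu).ne'

lemma continuousOn_umbilicalSlope {m : ℝ} (hm : 0 ≤ m) (lam : ℝ) :
    ContinuousOn (umbilicalSlope m lam) (Ioi (2 * m)) := by
  intro u hu
  have hA := one_sub_two_mul_div_pos hm hu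
  have hu0 : u ≠ 0 := by simp only [mem_Ioi] at hu; linarith
  have hS : 0 < √(1 - 2 * m / u + lam ^ 2 * u ^ 2) := Real.sqrt_pos.2 (by positivity)
  unfold umbilicalSlope
  exact (ContinuousAt.div (by fun_prop) (by fun_prop) (by positivity)).continuousWithinAt

lemma integral_inv_one_sub_two_mul_div {m a b : ℝ} (hm : 0 ≤ m) (ha : 2 * m < a) (hb : 2 * m < b) :
    ∫ u in a..b, (1 - 2 * m / u)⁻¹ = tortoise m b - tortoise m a := by
  have hab : [[a, b]] ⊆ Ioi (2 * m) := ordConnected_Ioi.uIcc_subset ha hb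
  refine intervalIntegral.integral_eq_sub_of_hasDerivAt (fun u hu => ?_)
    ((continuousOn_inv_one_sub_two_mul_div hm).mono hab).intervalIntegrable
  have hu : 2 * m < u := hab hu
  exact hasDerivAt_tortoise (by linarith) hu.ne'

lemma tendstoUniformlyOn_umbilicalSlope {m c : ℝ} (hm : 0 ≤ m) (hc : 2 * m < c) :
    TendstoUniformlyOn (umbilicalSlope m) (fun u => (1 - 2 * m / u)⁻¹) atTop (Ici c) := by
  have hc0 : 0 < c := by linarith
  refine .of_dist_le (ε := fun lam => ((lam * c) ^ 2)⁻¹) ?_ ?_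
  · exact tendsto_inv_atTop_zero.comp
      ((tendsto_pow_atTop two_ne_zero).comp (tendsto_id.atTop_mul_const hc0))
  filter_upwards [eventually_gt_atTop 0] with lam hlam u hu
  have hcu : c ≤ u := hu
  have hA := one_sub_two_mul_div_pos hm (hc.trans_le hcu)
  have hu0 : 0 < u := by linarith
  calc dist (1 - 2 * m / u)⁻¹ (umbilicalSlope m lam u)
      ≤ 1 / (lam * u) ^ 2 := by
        rw [Real.dist_eq, umbilicalSlope, ← mul_pow]
        exact abs_inv_sub_div_mul_sqrt_le hA (by positivity)
    _ ≤ ((lam * c) ^ 2)⁻¹ := by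
        rw [one_div]
        gcongr

lemma tendsto_integral_umbilicalSlope {m a b : ℝ} (hm : 0 ≤ m) (ha : 2 * m < a) (hb : 2 * m < b) :
    Tendsto (fun lam => ∫ u in a..b, umbilicalSlope m lam u) atTop
      (𝓝 (tortoise m b - tortoise m a)) := by
  have hab : [[a, b]] ⊆ Ioi (2 * m) := ordConnected_Ioi.uIcc_subset ha hb
  rw [← integral_inv_one_sub_two_mul_div hm ha hb]
  refine TendstoUniformlyOn.tendsto_intervalIntegral_of_continuousOn
    (.of_forall fun lam => (continuousOn_umbilicalSlope hm lam).mono hab) ?_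
  exact (tendstoUniformlyOn_umbilicalSlope hm (lt_min ha hb)).mono fun u hu => hu.1

open intervalIntegral in
/-- the umbilical slices converge to the null hypersurface:
for each fixed `s > 2m`, the solution
`ρ_λ(s) = 4m + ∫_{4m}^{s} λu/((1-2m/u)√(1-2m/u+λ²u²)) du`
converges to `s + 2m log(s/(2m) - 1)` as `λ → ∞`. -/
theorem umbilical_slices_converge_to_null (m : ℝ) (hm : 0 < m)
    (s : ℝ) (hs : 2 * m < s)
    (ρ : ℝ → ℝ → ℝ)
    (hρ : ∀ lam t, ρ lam t = 4 * m + ∫ u in (4 * m)..t,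
      lam * u / ((1 - 2 * m / u) * Real.sqrt (1 - 2 * m / u + lam ^ 2 * u ^ 2))) :
    Filter.Tendsto (fun lam => ρ lam s) Filter.atTop
      (nhds (s + 2 * m * Real.log (s / (2 * m) - 1))) := by
  have hlim :=
    (tendsto_integral_umbilicalSlope (a := 4 * m) hm.le (by linarith) hs).const_add (4 * m)
  have hval :
      4 * m + (tortoise m s - tortoise m (4 * m)) = s + 2 * m * Real.log (s / (2 * m) - 1) := by
    have : s / (2 * m) - 1 = (s - 2 * m) / (2 * m) := by field_simp
    rw [tortoise, tortoise, this, Real.log_div (by linarith) (by positivity)]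
    ring_nf
  simp only [hρ]
  rwa [hval] at hlim
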